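/- Fix α ∈ ℝ with α ≠ ±1 and b ∈ G. The function f : φ_α(G) → ℝ defined by f(c) := D^α(φ_α⁻¹(c)‖b) is twice Fréchet differentiable on the open set φ_α(G), and for every a ∈ G its second Fréchet derivative at the point c = φ_α(a) is the continuous bilinear form (u, v) ↦ ∫_B exp_G(α·a)·u·v dμ. If moreover μ has full support, i.e. μ(A) > 0 for every nonempty open A ⊆ B, then f is strictly convex on the convex set φ_α(G), i.e. f((1−t)c₀ + t c₁) < (1−t)f(c₀) + t f(c₁) for all distinct c₀, c₁ ∈ φ_α(G) and t ∈ (0,1). -/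

import Mathlib

open MeasureTheory BoundedContinuousFunction

noncomputable section

namespace Paper

variable {Y : Type*} [TopologicalSpace Y]

/-- Pointwise exponential map on `G = C_b(B;ℝ)`: `expG a x = exp (a x)`. -/
def expG (a : BoundedContinuousFunction Y ℝ) : BoundedContinuousFunction Y ℝ :=
  BoundedContinuousFunction.ofNormedAddCommGroup (fun x => Real.exp (a x))
    (Real.continuous_exp.comp a.continuous) (Real.exp ‖a‖)
    (fun x => by
      rw [Real.norm_eq_abs, abs_of_pos (Real.exp_pos _)]
      exact Real.exp_le_exp.2 ((le_abs_self _).trans (a.norm_coe_le_norm x)))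

@[simp] lemma expG_apply (a : BoundedContinuousFunction Y ℝ) (x : Y) :
    expG a x = Real.exp (a x) := rfl

/-- Amari's α-embedding chart `φ_α`. -/
def phi (α : ℝ) (a : BoundedContinuousFunction Y ℝ) : BoundedContinuousFunction Y ℝ :=
  if α = 1 then a else (2 / (1 - α)) • (expG (((1 - α) / 2) • a) - 1)

variable [MeasurableSpace Y]

/-- The α-divergence `D^α(a‖b)` (for `α ≠ ±1`) between the finite measures with
`μ`-densities `exp_G(a)` and `exp_G(b)`. -/
def Dalpha (μ : Measure Y) (α : ℝ) (a b : BoundedContinuousFunction Y ℝ) : ℝ :=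
  (2 / (1 + α)) * ∫ x, (phi (-1) a x - phi α a x) ∂μ
    + (2 / (1 - α)) * ∫ x, (phi (-1) b x - phi (-α) b x) ∂μ
    - ∫ x, phi α a x * phi (-α) b x ∂μ

/-- The extended Kullback–Leibler divergence `D^{−1}(a‖b)`. -/
def DKL (μ : Measure Y) (a b : BoundedContinuousFunction Y ℝ) : ℝ :=
  ∫ x, (expG b x - expG a x) ∂μ + ∫ x, expG a x * (a x - b x) ∂μ

end Paper

/-!
With `β = (1 - α) / 2`, the chart is `φ_α a = β⁻¹ • (exp (β • a) - 1)`, where `exp` is the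
exponential of the commutative Banach algebra `C_b(B)`. Its derivative is multiplication by the unit
`exp (β • a)`, so by the inverse function theorem `φ_α` has open range and its inverse has derivative
multiplication by `exp (-β • a)`. The chain rule gives
`f' (φ_α a) v = ∫ (K e^{(1-β) a} - K - φ_{-α} b) v dμ` with `K = 2 / (1 + α)`. Differentiating once
more and using `K (1 - β) = 1` and `1 - 2β = α` gives the Hessian `(u, v) ↦ ∫ e^{α a} u v dμ`. This
form is positive definite when `μ` charges every nonempty open set. The range of `φ_α` is convex,
being an affine image of the set of functions bounded below by a positive constant, so strict
convexity follows from the second derivative test along segments.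
-/

open NormedSpace Function

section InverseFunction

variable {𝕜 E F : Type*} [NontriviallyNormedField 𝕜] [NormedAddCommGroup E] [NormedSpace 𝕜 E]
  [NormedAddCommGroup F] [NormedSpace 𝕜 F] [CompleteSpace E] {f : E → F} {f' : E ≃L[𝕜] F} {a : E}

theorem HasStrictFDerivAt.invFun_of_injective (hf : HasStrictFDerivAt f (f' : E →L[𝕜] F) a)
    (hinj : Injective f) : HasStrictFDerivAt (invFun f) (f'.symm : F →L[𝕜] E) (f a) := by
  refine hf.to_localInverse.congr_of_eventuallyEq ?_
  filter_upwards [hf.eventually_right_inverse] with y hy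
  conv_rhs => rw [← hy]
  exact (leftInverse_invFun hinj _).symm

theorem HasStrictFDerivAt.range_mem_nhds (hf : HasStrictFDerivAt f (f' : E →L[𝕜] F) a) :
    Set.range f ∈ nhds (f a) :=
  hf.map_nhds_eq_of_equiv ▸ Filter.range_mem_map

end InverseFunction

section ExpChart

variable {𝔸 : Type*} [NormedCommRing 𝔸] [NormedAlgebra ℝ 𝔸] [NormedAlgebra ℚ 𝔸] [CompleteSpace 𝔸]

def mulExpEquiv (a : 𝔸) : 𝔸 ≃L[ℝ] 𝔸 :=
  .equivOfInverse (ContinuousLinearMap.mul ℝ 𝔸 (exp a)) (ContinuousLinearMap.mul ℝ 𝔸 (exp (-a)))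
    (fun u => by simp [← mul_assoc, ← exp_add])
    (fun u => by simp [← mul_assoc, ← exp_add])

@[simp] lemma mulExpEquiv_apply (a u : 𝔸) : mulExpEquiv a u = exp a * u := rfl

@[simp] lemma mulExpEquiv_symm_apply (a u : 𝔸) : (mulExpEquiv a).symm u = exp (-a) * u := rfl

lemma hasStrictFDerivAt_inv_smul_exp_smul_sub_one {β : ℝ} (hβ : β ≠ 0) (a : 𝔸) :
    HasStrictFDerivAt (fun a : 𝔸 => β⁻¹ • (exp (β • a) - 1))
      (mulExpEquiv (β • a) : 𝔸 →L[ℝ] 𝔸) a := by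
  have h : HasStrictFDerivAt (fun a : 𝔸 => β⁻¹ • (exp (β • a) - 1)) _ a :=
    (((hasStrictFDerivAt_exp (𝕂 := ℝ) (x := β • a)).comp a
      ((hasStrictFDerivAt_id a).const_smul β)).sub_const 1).const_smul β⁻¹
  refine h.congr_fderiv ?_
  ext u
  simp [smul_smul, hβ]

end ExpChart

namespace BoundedContinuousFunction

variable {Y : Type*} [TopologicalSpace Y]

lemma exp_apply (a : Y →ᵇ ℝ) (x : Y) : exp a x = Real.exp (a x) := by
  let evalRingHom : (Y →ᵇ ℝ) →+* ℝ :=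
    { toFun := fun f => f x, map_one' := rfl, map_mul' := fun _ _ => rfl, map_zero' := rfl,
      map_add' := fun _ _ => rfl }
  rw [Real.exp_eq_exp_ℝ]
  exact map_exp evalRingHom (evalCLM ℝ x).continuous a

lemma exp_injective : Injective (exp : (Y →ᵇ ℝ) → Y →ᵇ ℝ) := fun a a' h =>
  ext fun x => Real.exp_injective <| by rw [← exp_apply, ← exp_apply, h]

lemma exp_neg_norm_le_exp_apply (a : Y →ᵇ ℝ) (x : Y) : Real.exp (-‖a‖) ≤ exp a x := by
  rw [exp_apply, Real.exp_le_exp, neg_le]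
  exact (neg_le_abs _).trans (a.norm_coe_le_norm x)

lemma exists_exp_eq_of_forall_le {h : Y →ᵇ ℝ} {ε : ℝ} (hε : 0 < ε) (hh : ∀ x, ε ≤ h x) :
    ∃ l, exp l = h := by
  have hpos x : 0 < h x := hε.trans_le (hh x)
  let l : Y →ᵇ ℝ := ofNormedAddCommGroup (fun x => Real.log (h x))
    (h.continuous.log fun x => (hpos x).ne') (|Real.log ε| + ‖h‖) fun x => by
      rw [Real.norm_eq_abs, abs_le]
      have hlow := Real.log_le_log hε (hh x)
      have hup := (Real.log_le_self (hpos x).le).trans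
        ((le_abs_self _).trans (h.norm_coe_le_norm x))
      constructor <;> linarith [neg_abs_le (Real.log ε), abs_nonneg (Real.log ε), norm_nonneg h]
  exact ⟨l, ext fun x => by rw [exp_apply]; exact Real.exp_log (hpos x)⟩

lemma convex_range_exp : Convex ℝ (Set.range (exp : (Y →ᵇ ℝ) → Y →ᵇ ℝ)) := by
  rintro _ ⟨a₀, rfl⟩ _ ⟨a₁, rfl⟩ s t hs ht hst
  set ε := min (Real.exp (-‖a₀‖)) (Real.exp (-‖a₁‖))
  refine exists_exp_eq_of_forall_le (ε := ε) (lt_min (Real.exp_pos _) (Real.exp_pos _)) fun x => ?_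
  have h₀ : ε ≤ exp a₀ x := (min_le_left _ _).trans (exp_neg_norm_le_exp_apply a₀ x)
  have h₁ : ε ≤ exp a₁ x := (min_le_right _ _).trans (exp_neg_norm_le_exp_apply a₁ x)
  calc ε = s * ε + t * ε := by rw [← add_mul, hst, one_mul]
    _ ≤ (s • exp a₀ + t • exp a₁) x := by
      simp only [coe_add, coe_smul, Pi.add_apply, smul_eq_mul]
      gcongr

section Integral

variable [MeasurableSpace Y] [OpensMeasurableSpace Y] (μ : Measure Y) [IsFiniteMeasure μ]

def integralCLM : (Y →ᵇ ℝ) →L[ℝ] ℝ :=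
  LinearMap.mkContinuous
    { toFun := fun h => ∫ x, h x ∂μ
      map_add' := fun h h' => integral_add (h.integrable μ) (h'.integrable μ)
      map_smul' := fun r h => integral_const_mul r _ }
    (μ.real Set.univ) fun h => by simpa using h.norm_integral_le_mul_norm μ

@[simp] lemma integralCLM_apply (h : Y →ᵇ ℝ) : integralCLM μ h = ∫ x, h x ∂μ := rfl

def integralPairing : (Y →ᵇ ℝ) →L[ℝ] (Y →ᵇ ℝ) →L[ℝ] ℝ :=
  ContinuousLinearMap.compL ℝ _ _ ℝ (integralCLM μ) ∘L ContinuousLinearMap.mul ℝ (Y →ᵇ ℝ)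

@[simp] lemma integralPairing_apply (w u : Y →ᵇ ℝ) :
    integralPairing μ w u = integralCLM μ (w * u) := rfl

lemma integralPairing_mul_self_pos [μ.IsOpenPosMeasure] {w v : Y →ᵇ ℝ} (hw : ∀ x, 0 < w x)
    (hv : v ≠ 0) : 0 < integralPairing μ (w * v) v := by
  obtain ⟨x₀, hx₀⟩ : ∃ x, v x ≠ 0 := by
    by_contra! h
    exact hv (ext h)
  have hnonneg : 0 ≤ ⇑(w * v * v) := fun x => by
    simpa [mul_assoc] using mul_nonneg (hw x).le (mul_self_nonneg (v x))
  rw [integralPairing_apply, integralCLM_apply,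
    integral_pos_iff_support_of_nonneg hnonneg ((w * v * v).integrable μ)]
  exact (w * v * v).continuous.isOpen_support.measure_pos μ ⟨x₀, by simp [(hw x₀).ne', hx₀]⟩

end Integral

end BoundedContinuousFunction

section SecondDerivativeTest

variable {E : Type*} [NormedAddCommGroup E] [NormedSpace ℝ E]

theorem strictConvexOn_of_hasFDerivAt_fderiv {s : Set E} (hs : IsOpen s) (hconv : Convex ℝ s)
    {f : E → ℝ} {f'' : E → E →L[ℝ] E →L[ℝ] ℝ} (hf : ∀ x ∈ s, DifferentiableAt ℝ f x)
    (hf'' : ∀ x ∈ s, HasFDerivAt (fderiv ℝ f) (f'' x) x)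
    (hpos : ∀ x ∈ s, ∀ v ≠ 0, 0 < f'' x v v) : StrictConvexOn ℝ s f := by
  refine ⟨hconv, fun x hx y hy hxy a b ha hb hab => ?_⟩
  set v := y - x
  have hv : v ≠ 0 := sub_ne_zero.2 hxy.symm
  set ℓ : ℝ → E := fun t => x + t • v
  have hℓ (t : ℝ) : HasDerivAt ℓ v t :=
    (((hasDerivAt_id t).smul_const v).const_add x).congr_deriv (one_smul ℝ v)
  have hS : IsOpen (ℓ ⁻¹' s) :=
    hs.preimage (continuous_const.add (continuous_id.smul continuous_const))
  have hIcc : Set.Icc (0 : ℝ) 1 ⊆ ℓ ⁻¹' s := fun t ht => hconv.add_smul_sub_mem hx hy ht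
  have hd (t) (ht : t ∈ ℓ ⁻¹' s) : HasDerivAt (f ∘ ℓ) (fderiv ℝ f (ℓ t) v) t :=
    (hf _ ht).hasFDerivAt.comp_hasDerivAt t (hℓ t)
  have hd2 (t) (ht : t ∈ ℓ ⁻¹' s) : HasDerivAt (deriv (f ∘ ℓ)) (f'' (ℓ t) v v) t := by
    have h : HasDerivAt (fun t => fderiv ℝ f (ℓ t) v) (f'' (ℓ t) v v) t :=
      ((hf'' _ ht).comp_hasDerivAt t (hℓ t)).clm_apply (hasDerivAt_const t v) |>.congr_deriv
        (by simp)
    refine h.congr_of_eventuallyEq ?_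
    filter_upwards [hS.mem_nhds ht] with t ht using (hd t ht).deriv
  have hline : StrictConvexOn ℝ (Set.Icc 0 1) (f ∘ ℓ) := by
    refine strictConvexOn_of_deriv2_pos (convex_Icc 0 1)
      (fun t ht => (hd t (hIcc ht)).continuousAt.continuousWithinAt) fun t ht => ?_
    rw [interior_Icc] at ht
    rw [Function.iterate_succ, Function.iterate_one, Function.comp_apply,
      (hd2 t (hIcc (Set.Ioo_subset_Icc_self ht))).deriv]
    exact hpos _ (hIcc (Set.Ioo_subset_Icc_self ht)) v hv
  have := hline.2 (Set.left_mem_Icc.2 zero_le_one) (Set.right_mem_Icc.2 zero_le_one)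
    zero_ne_one ha hb hab
  have hab' : a = 1 - b := by linarith
  subst hab'
  simp only [Function.comp_apply, ℓ, v, smul_eq_mul, mul_zero, mul_one, zero_add, zero_smul,
    add_zero, one_smul, add_sub_cancel] at this ⊢
  convert this using 2
  module

end SecondDerivativeTest

namespace Paper

open BoundedContinuousFunction

variable {Y : Type*} [TopologicalSpace Y] {α : ℝ}

lemma expG_eq_exp (a : Y →ᵇ ℝ) : expG a = exp a := ext fun x => (exp_apply a x).symm

lemma phi_eq_inv_smul_exp_smul_sub_one (hα : α ≠ 1) :
    phi (Y := Y) α = fun a => ((1 - α) / 2)⁻¹ • (exp (((1 - α) / 2) • a) - 1) := by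
  funext a
  simp [phi, hα, expG_eq_exp]

lemma half_one_sub_ne_zero (hα : α ≠ 1) : (1 - α) / 2 ≠ 0 := by
  have := sub_ne_zero.2 hα.symm
  positivity

lemma phi_injective (hα : α ≠ 1) : Injective (phi (Y := Y) α) := by
  rw [phi_eq_inv_smul_exp_smul_sub_one hα]
  have hβ := half_one_sub_ne_zero hα
  exact (MulAction.injective₀ (inv_ne_zero hβ)).comp
    (sub_left_injective.comp (exp_injective.comp (MulAction.injective₀ hβ)))

lemma hasStrictFDerivAt_phi (hα : α ≠ 1) (a : Y →ᵇ ℝ) :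
    HasStrictFDerivAt (phi α) (mulExpEquiv (((1 - α) / 2) • a) : (Y →ᵇ ℝ) →L[ℝ] Y →ᵇ ℝ) a := by
  rw [phi_eq_inv_smul_exp_smul_sub_one hα]
  exact hasStrictFDerivAt_inv_smul_exp_smul_sub_one (half_one_sub_ne_zero hα) a

lemma isOpen_range_phi (hα : α ≠ 1) : IsOpen (Set.range (phi (Y := Y) α)) := by
  refine isOpen_iff_mem_nhds.2 ?_
  rintro _ ⟨a, rfl⟩
  exact (hasStrictFDerivAt_phi hα a).range_mem_nhds

lemma hasStrictFDerivAt_invFun_phi (hα : α ≠ 1) (a : Y →ᵇ ℝ) :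
    HasStrictFDerivAt (invFun (phi α))
      ((mulExpEquiv (((1 - α) / 2) • a)).symm : (Y →ᵇ ℝ) →L[ℝ] Y →ᵇ ℝ) (phi α a) :=
  (hasStrictFDerivAt_phi hα a).invFun_of_injective (phi_injective hα)

lemma convex_range_phi (hα : α ≠ 1) : Convex ℝ (Set.range (phi (Y := Y) α)) := by
  have hβ := half_one_sub_ne_zero hα
  rw [phi_eq_inv_smul_exp_smul_sub_one hα]
  set β := (1 - α) / 2
  rintro _ ⟨a₀, rfl⟩ _ ⟨a₁, rfl⟩ s t hs ht hst
  obtain ⟨l, hl⟩ := convex_range_exp ⟨β • a₀, rfl⟩ ⟨β • a₁, rfl⟩ hs ht hst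
  refine ⟨β⁻¹ • l, ?_⟩
  obtain rfl : t = 1 - s := by linarith
  simp only [smul_smul, mul_inv_cancel₀ hβ, one_smul, hl]
  module

section Divergence

variable [MeasurableSpace Y] [OpensMeasurableSpace Y] (μ : Measure Y) [IsFiniteMeasure μ]

lemma hasFDerivAt_Dalpha_left (hα : α ≠ 1) (a b : Y →ᵇ ℝ) :
    HasFDerivAt (fun a => Dalpha μ α a b)
      (integralPairing μ ((2 / (1 + α)) • (exp a - exp (((1 - α) / 2) • a))
        - exp (((1 - α) / 2) • a) * phi (-α) b)) a := by
  have hφ := (hasStrictFDerivAt_phi hα a).hasFDerivAt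
  have hφ₁ := (hasStrictFDerivAt_phi (Y := Y) (α := -1) (by norm_num) a).hasFDerivAt
  have hD : (fun a => Dalpha μ α a b) = fun a =>
      2 / (1 + α) * integralCLM μ (phi (-1) a - phi α a)
        + 2 / (1 - α) * ∫ x, (phi (-1) b x - phi (-α) b x) ∂μ
        - integralCLM μ (phi α a * phi (-α) b) := by
    funext a
    simp only [Dalpha, integralCLM_apply, coe_sub, coe_mul, Pi.sub_apply, Pi.mul_apply]
  rw [hD]
  refine (((((integralCLM μ).hasFDerivAt.comp a (hφ₁.sub hφ)).const_mul _).add_const _).sub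
    ((integralCLM μ).hasFDerivAt.comp a (hφ.mul_const _))).congr_fderiv ?_
  ext u
  simp only [_root_.sub_apply, ContinuousLinearMap.comp_apply, _root_.smul_apply,
    ContinuousLinearEquiv.coe_coe, mulExpEquiv_apply, integralPairing_apply, ← map_smul, ← map_sub]
  congr 1
  rw [show ((1 : ℝ) - -1) / 2 = 1 by norm_num, one_smul]
  simp only [smul_sub, sub_mul, smul_mul_assoc, smul_eq_mul]
  ring

lemma hasFDerivAt_Dalpha_invFun_phi (hα₁ : α ≠ 1) (hα₂ : α ≠ -1) (a b : Y →ᵇ ℝ) :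
    HasFDerivAt (fun c => Dalpha μ α (invFun (phi α) c) b)
      (integralPairing μ ((2 / (1 + α)) • exp (((1 + α) / 2) • a)
        - ((2 / (1 + α)) • 1 + phi (-α) b))) (phi α a) := by
  have h := (hasFDerivAt_Dalpha_left μ hα₁ (invFun (phi α) (phi α a)) b).comp (phi α a)
    (hasStrictFDerivAt_invFun_phi hα₁ a).hasFDerivAt
  rw [leftInverse_invFun (phi_injective hα₁) a] at h
  refine h.congr_fderiv ?_
  ext u
  simp only [ContinuousLinearMap.comp_apply, ContinuousLinearEquiv.coe_coe,
    mulExpEquiv_symm_apply, integralPairing_apply]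
  congr 1
  ext x
  simp only [coe_mul, coe_sub, coe_smul, coe_add, coe_one, Pi.mul_apply, Pi.sub_apply,
    Pi.add_apply, Pi.one_apply, smul_eq_mul, exp_apply, coe_neg, Pi.neg_apply]
  have h1 : 1 + α ≠ 0 := fun h => hα₂ (by linarith)
  rw [show (1 + α) / 2 * a x = a x + -((1 - α) / 2 * a x) by ring, Real.exp_add, Real.exp_neg]
  field_simp
  ring

lemma hasFDerivAt_fderiv_Dalpha_invFun_phi (hα₁ : α ≠ 1) (hα₂ : α ≠ -1) (a b : Y →ᵇ ℝ) :
    HasFDerivAt (fderiv ℝ fun c => Dalpha μ α (invFun (phi α) c) b)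
      (integralPairing μ ∘L ContinuousLinearMap.mul ℝ (Y →ᵇ ℝ) (exp (α • a))) (phi α a) := by
  have hψ := (hasStrictFDerivAt_invFun_phi hα₁ a).hasFDerivAt
  have hw : HasFDerivAt (fun c => (2 / (1 + α)) • exp (((1 + α) / 2) • invFun (phi α) c)
      - ((2 / (1 + α)) • 1 + phi (-α) b)) _ (phi α a) :=
    (((hasFDerivAt_exp (𝕂 := ℝ)).comp (phi α a) (hψ.const_smul ((1 + α) / 2))).const_smul
      (2 / (1 + α))).sub_const ((2 / (1 + α)) • 1 + phi (-α) b)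
  have h := HasFDerivAt.comp (G := (Y →ᵇ ℝ) →L[ℝ] ℝ) (phi α a)
    (integralPairing μ).hasFDerivAt hw
  rw [Pi.smul_apply, leftInverse_invFun (phi_injective hα₁) a] at h
  refine (h.congr_fderiv ?_).congr_of_eventuallyEq ?_
  · ext u v
    simp only [ContinuousLinearMap.comp_apply, integralPairing_apply]
    congr 2
    ext x
    simp only [_root_.smul_apply, ContinuousLinearMap.comp_apply,
      ContinuousLinearEquiv.coe_coe, mulExpEquiv_symm_apply, ContinuousLinearMap.mul_apply',
      one_apply_eq_self, coe_smul, coe_mul, Pi.mul_apply, smul_eq_mul, exp_apply, coe_neg,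
      Pi.neg_apply]
    have h1 : 1 + α ≠ 0 := fun h => hα₂ (by linarith)
    rw [show α * a x = (1 + α) / 2 * a x + -((1 - α) / 2 * a x) by ring, Real.exp_add]
    field_simp
  · filter_upwards [(isOpen_range_phi hα₁).mem_nhds ⟨a, rfl⟩] with c hc
    obtain ⟨a', rfl⟩ := hc
    rw [(hasFDerivAt_Dalpha_invFun_phi μ hα₁ hα₂ a' b).fderiv, Function.comp_apply,
      leftInverse_invFun (phi_injective hα₁) a']

end Divergence

end Paper

theorem statement_10_general {X : Type*} [NormedAddCommGroup X]
    [MeasurableSpace X] [OpensMeasurableSpace X]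
    (B : Set X)
    (μ : Measure B) [IsProbabilityMeasure μ]
    (α : ℝ) (hα1 : α ≠ 1) (hα2 : α ≠ -1) (b : BoundedContinuousFunction B ℝ) :
    ∃ ψ : BoundedContinuousFunction B ℝ → BoundedContinuousFunction B ℝ,
      (∀ a, ψ (Paper.phi α a) = a) ∧
      (∀ a : BoundedContinuousFunction B ℝ,
        ∃ D₂ : BoundedContinuousFunction B ℝ →L[ℝ]
                 BoundedContinuousFunction B ℝ →L[ℝ] ℝ,
          (∀ u v : BoundedContinuousFunction B ℝ,
            D₂ u v = ∫ x, Real.exp (α * a x) * u x * v x ∂μ) ∧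
          HasFDerivAt (fderiv ℝ (fun c => Paper.Dalpha μ α (ψ c) b)) D₂
            (Paper.phi α a)) ∧
      ((∀ A : Set B, IsOpen A → A.Nonempty → 0 < μ A) →
        StrictConvexOn ℝ (Set.range (Paper.phi (Y := B) α))
          (fun c => Paper.Dalpha μ α (ψ c) b)) := by
  open Paper in
  refine ⟨invFun (phi α), leftInverse_invFun (phi_injective hα1), fun a =>
    ⟨_, fun u v => ?_, hasFDerivAt_fderiv_Dalpha_invFun_phi μ hα1 hα2 a b⟩, fun hfull => ?_⟩
  · simp [exp_apply]
  · have : μ.IsOpenPosMeasure := ⟨fun U hU hne => (hfull U hU hne).ne'⟩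
    refine strictConvexOn_of_hasFDerivAt_fderiv (isOpen_range_phi hα1) (convex_range_phi hα1)
      (f'' := fun c => integralPairing μ ∘L .mul ℝ _ (exp (α • invFun (phi α) c))) ?_ ?_ ?_
    · rintro _ ⟨a, rfl⟩
      exact (hasFDerivAt_Dalpha_invFun_phi μ hα1 hα2 a b).differentiableAt
    · rintro _ ⟨a, rfl⟩
      rw [leftInverse_invFun (phi_injective hα1) a]
      exact hasFDerivAt_fderiv_Dalpha_invFun_phi μ hα1 hα2 a b
    · rintro _ ⟨a, rfl⟩ v hv
      exact integralPairing_mul_self_pos μ (fun x => by simp [exp_apply, Real.exp_pos]) hv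

/-- for fixed `α ≠ ±1` and `b ∈ G`, the function
`f(c) = D^α(φ_α⁻¹(c)‖b)` is twice Fréchet differentiable on `φ_α(G)`, with second
derivative at `c = φ_α(a)` the bilinear form `(u, v) ↦ ∫ exp_G(α·a)·u·v dμ`; if
moreover `μ` has full support, then `f` is strictly convex on the convex set
`φ_α(G)`. -/
theorem statement_10 {X : Type*} [NormedAddCommGroup X] [NormedSpace ℝ X]
    [MeasurableSpace X] [OpensMeasurableSpace X]
    (B : Set X) (hB : IsOpen B) (hBne : B.Nonempty)
    (μ : Measure B) [IsProbabilityMeasure μ]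
    (α : ℝ) (hα1 : α ≠ 1) (hα2 : α ≠ -1) (b : BoundedContinuousFunction B ℝ) :
    ∃ ψ : BoundedContinuousFunction B ℝ → BoundedContinuousFunction B ℝ,
      (∀ a, ψ (Paper.phi α a) = a) ∧
      (∀ a : BoundedContinuousFunction B ℝ,
        ∃ D₂ : BoundedContinuousFunction B ℝ →L[ℝ]
                 BoundedContinuousFunction B ℝ →L[ℝ] ℝ,
          (∀ u v : BoundedContinuousFunction B ℝ,
            D₂ u v = ∫ x, Real.exp (α * a x) * u x * v x ∂μ) ∧
          HasFDerivAt (fderiv ℝ (fun c => Paper.Dalpha μ α (ψ c) b)) D₂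
            (Paper.phi α a)) ∧
      ((∀ A : Set B, IsOpen A → A.Nonempty → 0 < μ A) →
        StrictConvexOn ℝ (Set.range (Paper.phi (Y := B) α))
          (fun c => Paper.Dalpha μ α (ψ c) b)) :=
  statement_10_general B μ α hα1 hα2 b
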